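/- Let E be the explosion operator, with addition of sequences taken coordinatewise. Then the system e = E(k·θe + (b-k)·e) for the b-ary tree with constant rotor k < b, together with e_1 = 1, has a unique binary solution, namely: for k = 0 it is 1 0^{z_1} 1 0^{z_2} 1 ⋯ and for 0 < k < b it is 1 0^{[ℓ_1 = b-k]} 1 0^{[ℓ_2 = b-k]} 1 ⋯, where z_t is the number of trailing base-b zeros of t and ℓ_t its last nonzero base-b digit. -/

import Mathlib

open Classical in
/-- The explosion operator: `explode a` is the binary sequence
`1^{a₀} 0 1^{a₁} 0 1^{a₂} 0 ⋯` (sequences indexed from 0). -/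
noncomputable def explode (a : ℕ → ℕ) : ℕ → ℕ := fun n =>
  if ∃ t, (∑ i ∈ Finset.range t, (a i + 1)) ≤ n ∧
      n < (∑ i ∈ Finset.range t, (a i + 1)) + a t then 1 else 0

/-- The shift operator `θ : (a₁,a₂,…) ↦ (0,a₁,a₂,…)` (sequences indexed from 0). -/
def shift (a : ℕ → ℕ) : ℕ → ℕ := fun n => match n with
  | 0 => 0
  | n + 1 => a n

/-- The block lengths of the escape sequence of the `b`-ary tree with constant rotor
configuration `k`: `w t = z_t` (number of trailing zeros of `t` in base `b`) when
`k = 0`, and `w t = [ℓ_t = b-k]` (indicator that the last nonzero base-`b` digit of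
`t` is `b-k`) when `k > 0`. -/
def blockLen (b k t : ℕ) : ℕ :=
  if k = 0 then Nat.maxPowDiv b t
  else if (t / b ^ Nat.maxPowDiv b t) % b = b - k then 1 else 0

open Classical in
/-- The explicit binary sequence `1 0^{w_1} 1 0^{w_2} 1 0^{w_3} ⋯` (indexed from 0):
position `n` is a one exactly when `n = m + Σ_{t=1}^m w_t` for some `m ≥ 0`. -/
noncomputable def explicitSeq (b k : ℕ) : ℕ → ℕ := fun n =>
  if ∃ m : ℕ, n = m + ∑ t ∈ Finset.Icc 1 m, blockLen b k t then 1 else 0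

namespace UBSaux

def G (b k m : ℕ) : ℕ := ∑ t ∈ Finset.Icc 1 m, blockLen b k t

def P (b k m : ℕ) : ℕ := m + G b k m

theorem G_zero (b k : ℕ) : G b k 0 = 0 := by simp [G]

theorem G_succ (b k m : ℕ) : G b k (m+1) = G b k m + blockLen b k (m+1) := by
  unfold G
  rw [Finset.sum_Icc_succ_top (by omega)]

theorem P_zero (b k : ℕ) : P b k 0 = 0 := by simp [P, G_zero]

theorem P_succ (b k m : ℕ) : P b k (m+1) = P b k m + blockLen b k (m+1) + 1 := by
  simp [P, G_succ]; omega

theorem maxPowDiv_eq_zero {b n : ℕ} (hb : 2 ≤ b) (h : ¬ b ∣ n) :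
    Nat.maxPowDiv b n = 0 := by
  by_contra h0
  have h1 := Nat.maxPowDiv.pow_dvd (p := b) (n := n)
  exact h (dvd_trans (dvd_pow_self b h0) h1)

theorem w_nondvd {b k : ℕ} (hb : 2 ≤ b) (m r : ℕ) (h1 : 1 ≤ r) (h2 : r < b) :
    blockLen b k (b*m + r) = if r = b - k then 1 else 0 := by
  have hnd : ¬ b ∣ (b*m + r) := by
    rintro ⟨c, hc⟩
    have : b ∣ r := (Nat.dvd_add_right ⟨m, rfl⟩).mp ⟨c, hc⟩
    have := Nat.le_of_dvd (by omega) this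
    omega
  have h0 : Nat.maxPowDiv b (b*m + r) = 0 := maxPowDiv_eq_zero hb hnd
  have hmod : (b*m + r) % b = r := by
    rw [Nat.mul_add_mod, Nat.mod_eq_of_lt h2]
  unfold blockLen
  rcases Nat.eq_zero_or_pos k with hk0 | hk0
  · subst hk0
    rw [if_pos rfl, h0]
    rw [if_neg (show ¬ (r = b - 0) by omega)]
  · rw [if_neg (show ¬ k = 0 by omega), h0]
    simp only [pow_zero, Nat.div_one, hmod]

theorem w_dvd {b k : ℕ} (hb : 2 ≤ b) (s : ℕ) (hs : 1 ≤ s) :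
    blockLen b k (b*s) = blockLen b k s + if k = 0 then 1 else 0 := by
  have hv : Nat.maxPowDiv b (b*s) = Nat.maxPowDiv b s + 1 :=
    Nat.maxPowDiv.base_mul_eq_succ (by omega) (by omega)
  have hdiv : (b*s) / b ^ (Nat.maxPowDiv b s + 1) = s / b ^ (Nat.maxPowDiv b s) := by
    rw [pow_succ, mul_comm (b ^ Nat.maxPowDiv b s) b, ← Nat.div_div_eq_div_mul,
      Nat.mul_div_cancel_left _ (by omega : 0 < b)]
  unfold blockLen
  rcases Nat.eq_zero_or_pos k with hk0 | hk0
  · subst hk0; simp [hv]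
  · have hkne : ¬ k = 0 := by omega
    simp only [if_neg hkne]
    rw [hv, hdiv]
    simp

theorem G_rec {b k : ℕ} (hb : 2 ≤ b) (hk : k < b) :
    ∀ m r, r < b → G b k (b*m + r) = G b k m + m + if b - k ≤ r then 1 else 0 := by
  intro m
  induction m with
  | zero =>
    intro r hr
    rw [G_zero]
    induction r with
    | zero => rw [if_neg (show ¬ b - k ≤ 0 by omega)]; simp [G_zero]
    | succ r ih =>
      have hr' : r < b := by omega
      have h1 : G b k (b*0 + (r+1)) = G b k (b*0 + r) + blockLen b k (b*0 + (r+1)) := by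
        rw [show b*0 + (r+1) = (b*0 + r) + 1 by ring]
        exact G_succ b k (b*0 + r)
      rw [h1, ih hr', w_nondvd hb 0 (r+1) (by omega) hr]
      split_ifs <;> omega
  | succ m ih =>
    have h0 : G b k (b*(m+1)) = G b k (m+1) + (m+1) := by
      have hbs : b*(m+1) = (b*m + (b-1)) + 1 := by
        have : b*(m+1) = b*m + b := by ring
        omega
      rw [hbs, G_succ, ← hbs, w_dvd hb (m+1) (by omega), ih (b-1) (by omega),
        G_succ b k m]
      split_ifs <;> omega
    intro r
    induction r with
    | zero => intro _; rw [if_neg (show ¬ b - k ≤ 0 by omega)]; simpa using h0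
    | succ r ihr =>
      intro hr
      have h1 : G b k (b*(m+1) + (r+1)) = G b k (b*(m+1) + r) + blockLen b k (b*(m+1) + (r+1)) := by
        rw [show b*(m+1) + (r+1) = (b*(m+1) + r) + 1 by ring]
        exact G_succ b k _
      rw [h1, ihr (by omega), w_nondvd hb (m+1) (r+1) (by omega) hr]
      split_ifs <;> omega

theorem P_rec {b k : ℕ} (hb : 2 ≤ b) (hk : k < b) (m r : ℕ) (hr : r < b) :
    P b k (b*m + r) = P b k m + b*m + r + if b - k ≤ r then 1 else 0 := by
  unfold P
  rw [G_rec hb hk m r hr]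
  generalize b*m = q
  split_ifs <;> omega

theorem P_strictMono (b k : ℕ) : StrictMono (P b k) := by
  apply strictMono_nat_of_lt_succ
  intro m
  rw [P_succ]
  omega

theorem not_one_eq_zeroPos {b k : ℕ} {M j : ℕ} (h1 : 1 ≤ j)
    (h2 : j ≤ blockLen b k (M+1)) (m : ℕ) : P b k m ≠ P b k M + j := by
  intro h
  have hMm : M < m := by
    have : P b k M < P b k m := by omega
    exact (P_strictMono b k).lt_iff_lt.mp this
  have : P b k (M+1) ≤ P b k m := (P_strictMono b k).le_iff_le.mpr (by omega)
  rw [P_succ] at this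
  omega

theorem decomp (b k : ℕ) (n : ℕ) :
    ∃ m j, j ≤ blockLen b k (m+1) ∧ n = P b k m + j := by
  induction n with
  | zero => exact ⟨0, 0, by omega, by rw [P_zero]⟩
  | succ n ih =>
    obtain ⟨m, j, hj, hn⟩ := ih
    rcases Nat.lt_or_ge j (blockLen b k (m+1)) with h | h
    · exact ⟨m, j+1, by omega, by omega⟩
    · exact ⟨m+1, 0, by omega, by rw [P_succ]; omega⟩

open Classical in
theorem e_def (b k n : ℕ) :
    explicitSeq b k n = if (∃ m, n = P b k m) then 1 else 0 := rfl

theorem e_one {b k n : ℕ} (h : ∃ m, n = P b k m) : explicitSeq b k n = 1 := by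
  rw [e_def, if_pos h]

theorem e_zero {b k n : ℕ} (h : ¬ ∃ m, n = P b k m) : explicitSeq b k n = 0 := by
  rw [e_def, if_neg h]

noncomputable def N (b k s : ℕ) : ℕ := ∑ i ∈ Finset.range s, explicitSeq b k i

theorem N_succ (b k s : ℕ) : N b k (s+1) = N b k s + explicitSeq b k s :=
  Finset.sum_range_succ _ _

theorem N_A (b k m : ℕ) : ∀ j, j ≤ blockLen b k (m+1) →
    N b k (P b k m + 1 + j) = N b k (P b k m + 1) := by
  intro j
  induction j with
  | zero => intro _; rfl
  | succ j ih =>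
    intro hj
    rw [show P b k m + 1 + (j+1) = (P b k m + 1 + j) + 1 by ring, N_succ,
      ih (by omega), e_zero, add_zero]
    push_neg
    intro m'
    have := not_one_eq_zeroPos (b := b) (k := k) (j := j+1) (by omega) hj m'
    omega

theorem N_B (b k : ℕ) : ∀ m, N b k (P b k m + 1) = m + 1 := by
  intro m
  induction m with
  | zero =>
    rw [P_zero]
    show N b k 1 = 1
    rw [N, Finset.sum_range_one, e_one ⟨0, (P_zero b k).symm⟩]
  | succ m ih =>
    have hP : P b k (m+1) = P b k m + 1 + blockLen b k (m+1) := by rw [P_succ]; ring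
    rw [N_succ, hP, N_A b k m _ le_rfl, ih, e_one ⟨m+1, hP.symm⟩]

theorem N_P (b k m : ℕ) : N b k (P b k m) = m := by
  cases m with
  | zero => rw [P_zero]; rfl
  | succ m =>
    rw [show P b k (m+1) = P b k m + 1 + blockLen b k (m+1) by rw [P_succ]; ring,
      N_A b k m _ le_rfl, N_B]

theorem N_ones {b k m j : ℕ} (hj : j ≤ blockLen b k (m+1)) :
    N b k (P b k m + 1 + j) = m + 1 := by
  rw [N_A b k m j hj, N_B]

noncomputable def fseq (b k : ℕ) : ℕ → ℕ :=
  fun n => k * shift (explicitSeq b k) n + (b - k) * explicitSeq b k n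

def S (a : ℕ → ℕ) (t : ℕ) : ℕ := ∑ i ∈ Finset.range t, (a i + 1)

noncomputable def F (b k : ℕ) : ℕ → ℕ := S (fseq b k)

theorem F_succ_eq (b k t : ℕ) :
    F b k (t+1) = (t+1) + k * N b k t + (b-k) * N b k (t+1) := by
  have hshift : ∑ i ∈ Finset.range (t+1), shift (explicitSeq b k) i = N b k t := by
    rw [Finset.sum_range_succ']
    simp only [shift, N, add_zero]
  unfold F S fseq
  rw [Finset.sum_add_distrib, Finset.sum_const, Finset.card_range,
    Finset.sum_add_distrib, ← Finset.mul_sum, ← Finset.mul_sum, hshift]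
  rw [show (∑ i ∈ Finset.range (t+1), explicitSeq b k i) = N b k (t+1) from rfl]
  simp only [smul_eq_mul, mul_one]
  ring

theorem F_at_one {b k : ℕ} (hk : k < b) (m : ℕ) :
    F b k (P b k m + 1) = P b k m + 1 + b*m + (b-k) := by
  obtain ⟨c, rfl⟩ : ∃ c, b = k + c := ⟨b - k, by omega⟩
  rw [F_succ_eq, N_P, N_B]
  simp only [Nat.add_sub_cancel_left]
  ring

theorem F_at_zero {b k : ℕ} (hk : k < b) {m j : ℕ} (hj1 : 1 ≤ j)
    (hj2 : j ≤ blockLen b k (m+1)) :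
    F b k (P b k m + j + 1) = P b k m + j + 1 + b*(m+1) := by
  have hN1 : N b k (P b k m + j) = m + 1 := by
    have := N_ones (b := b) (k := k) (m := m) (j := j - 1) (by omega)
    rw [show P b k m + 1 + (j-1) = P b k m + j by omega] at this
    exact this
  have hN2 : N b k (P b k m + j + 1) = m + 1 := by
    have := N_ones (b := b) (k := k) (m := m) (j := j) hj2
    rw [show P b k m + 1 + j = P b k m + j + 1 by omega] at this
    exact this
  obtain ⟨c, rfl⟩ : ∃ c, b = k + c := ⟨b - k, by omega⟩
  rw [F_succ_eq, hN1, hN2]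
  simp only [Nat.add_sub_cancel_left]
  ring

theorem S_succ (a : ℕ → ℕ) (t : ℕ) : S a (t+1) = S a t + (a t + 1) :=
  Finset.sum_range_succ _ _

theorem S_strictMono (a : ℕ → ℕ) : StrictMono (S a) := by
  apply strictMono_nat_of_lt_succ
  intro t
  rw [S_succ]
  omega

theorem exists_block (a : ℕ → ℕ) (n : ℕ) : ∃ t, S a t ≤ n ∧ n < S a (t+1) := by
  induction n with
  | zero =>
    refine ⟨0, le_rfl, ?_⟩
    have := S_succ a 0
    have h0 : S a 0 = 0 := rfl
    omega
  | succ n ih =>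
    obtain ⟨t, h1, h2⟩ := ih
    by_cases h : n + 1 < S a (t+1)
    · exact ⟨t, by omega, h⟩
    · refine ⟨t+1, by omega, ?_⟩
      have := S_succ a (t+1)
      omega

theorem block_unique (a : ℕ → ℕ) {n t t' : ℕ} (h1 : S a t ≤ n) (h2 : n < S a (t+1))
    (h1' : S a t' ≤ n) (h2' : n < S a (t'+1)) : t = t' := by
  by_contra h
  rcases Nat.lt_or_ge t t' with hlt | hge
  · have := (S_strictMono a).le_iff_le.mpr (show t + 1 ≤ t' by omega)
    omega
  · have := (S_strictMono a).le_iff_le.mpr (show t' + 1 ≤ t by omega)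
    omega

theorem explode_cond_iff (a : ℕ → ℕ) (n : ℕ) :
    (∃ t, S a t ≤ n ∧ n < S a t + a t) ↔ ¬ ∃ t, n + 1 = S a (t+1) := by
  constructor
  · rintro ⟨t, h1, h2⟩ ⟨t', heq⟩
    have hs := S_succ a t
    have hs' := S_succ a t'
    have ht' : t = t' := block_unique a h1 (by omega) (by omega) (by omega)
    subst ht'
    omega
  · intro h
    obtain ⟨t, h1, h2⟩ := exists_block a n
    refine ⟨t, h1, ?_⟩
    have hs := S_succ a t
    have : n + 1 ≠ S a (t+1) := fun hc => h ⟨t, hc⟩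
    omega

open Classical in
theorem explode_eq (a : ℕ → ℕ) (n : ℕ) :
    explode a n = if (∃ t, n + 1 = S a (t+1)) then 0 else 1 := by
  have : explode a n = if (∃ t, S a t ≤ n ∧ n < S a t + a t) then 1 else 0 := rfl
  rw [this]
  by_cases h : ∃ t, n + 1 = S a (t+1)
  · rw [if_pos h, if_neg (fun hc => ((explode_cond_iff a n).mp hc) h)]
  · rw [if_pos ((explode_cond_iff a n).mpr h), if_neg h]

theorem w_le_one {b k t : ℕ} (hk : k ≠ 0) : blockLen b k t ≤ 1 := by
  unfold blockLen
  rw [if_neg hk]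
  split <;> omega

theorem memZ_A {b k : ℕ} (hb : 2 ≤ b) (hk : k < b) (m : ℕ) :
    ∃ M i, 1 ≤ i ∧ i ≤ blockLen b k (M+1) ∧ P b k m + b*m + (b-k) = P b k M + i := by
  refine ⟨b*m + (b-k-1), 1, le_rfl, ?_, ?_⟩
  · have hidx : b*m + (b-k-1) + 1 = b*m + (b-k) := by
      rw [Nat.add_assoc]
      congr 1
      omega
    rw [hidx]
    rcases Nat.eq_zero_or_pos k with rfl | hk1
    · rw [show b*m + (b-0) = b*(m+1) by rw [Nat.sub_zero]; ring,
        w_dvd hb (m+1) (by omega)]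
      simp
    · rw [w_nondvd hb m (b-k) (by omega) (by omega), if_pos rfl]
  · have hP := P_rec hb hk m (b-k-1) (by omega)
    rw [if_neg (show ¬ b - k ≤ b-k-1 by omega)] at hP
    rw [hP]
    generalize P b k m = p
    generalize b*m = q
    omega

theorem memZ_B {b k : ℕ} (hb : 2 ≤ b) (hk : k < b) (m j : ℕ) (hj1 : 1 ≤ j)
    (hj2 : j ≤ blockLen b k (m+1)) :
    ∃ M i, 1 ≤ i ∧ i ≤ blockLen b k (M+1) ∧
      P b k m + b*(m+1) + j = P b k M + i := by
  have hP := P_rec hb hk m (b-1) (by omega)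
  have hidx : b*m + (b-1) + 1 = b*(m+1) := by
    have : b*(m+1) = b*m + b := by ring
    omega
  have hw : blockLen b k (b*m + (b-1) + 1) =
      blockLen b k (m+1) + if k = 0 then 1 else 0 := by
    rw [hidx]; exact w_dvd hb (m+1) (by omega)
  rcases Nat.eq_zero_or_pos k with rfl | hk1
  · rw [if_pos rfl] at hw
    rw [if_neg (show ¬ b - 0 ≤ b - 1 by omega)] at hP
    refine ⟨b*m + (b-1), j+1, by omega, by omega, ?_⟩
    rw [hP, show b*(m+1) = b*m + b from by ring]
    generalize P b 0 m = p
    generalize b*m = q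
    omega
  · rw [if_neg (show ¬ k = 0 by omega), add_zero] at hw
    rw [if_pos (show b - k ≤ b - 1 by omega)] at hP
    have hj : j = 1 := by
      have := w_le_one (b := b) (t := m+1) (show k ≠ 0 by omega)
      omega
    subst hj
    refine ⟨b*m + (b-1), 1, le_rfl, by omega, ?_⟩
    rw [hP, show b*(m+1) = b*m + b from by ring]
    generalize P b k m = p
    generalize b*m = q
    omega

theorem zero_is_F {b k : ℕ} (hb : 2 ≤ b) (hk : k < b) (M j : ℕ) (hj1 : 1 ≤ j)
    (hj2 : j ≤ blockLen b k (M+1)) : ∃ t, P b k M + j + 1 = F b k (t+1) := by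
  obtain ⟨m, r, hr, hM1⟩ : ∃ m r, r < b ∧ M + 1 = b*m + r :=
    ⟨(M+1)/b, (M+1)%b, Nat.mod_lt _ (by omega),
      (Nat.div_add_mod (M+1) b).symm⟩
  rcases Nat.eq_zero_or_pos r with hr0 | hr0
  · -- r = 0 : M + 1 = b*m, m ≥ 1
    subst hr0
    obtain ⟨m', rfl⟩ : ∃ m', m = m' + 1 := by
      refine ⟨m - 1, ?_⟩
      rcases Nat.eq_zero_or_pos m with rfl | h
      · omega
      · omega
    have hbm : b*(m'+1) = b*m' + b := by ring
    have hMv : M = b*m' + (b-1) := by omega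
    have hw : blockLen b k (M+1) = blockLen b k (m'+1) + if k = 0 then 1 else 0 := by
      rw [show M + 1 = b*(m'+1) by omega]
      exact w_dvd hb (m'+1) (by omega)
    have hP := P_rec hb hk m' (b-1) (by omega)
    rw [← hMv] at hP
    rcases Nat.eq_zero_or_pos k with rfl | hk1
    · rw [if_pos rfl] at hw
      rw [if_neg (show ¬ b - 0 ≤ b - 1 by omega)] at hP
      rcases Nat.lt_or_ge j 2 with hj | hj
      · -- j = 1
        refine ⟨P b 0 m', ?_⟩
        rw [F_at_one hk m']
        omega
      · -- j ≥ 2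
        refine ⟨P b 0 m' + (j-1), ?_⟩
        rw [show P b 0 m' + (j-1) + 1 = P b 0 m' + (j-1) + 1 from rfl,
          F_at_zero hk (show 1 ≤ j-1 by omega) (show j-1 ≤ blockLen b 0 (m'+1) by omega)]
        omega
    · rw [if_neg (show ¬ k = 0 by omega), add_zero] at hw
      rw [if_pos (show b - k ≤ b - 1 by omega)] at hP
      have hj : j = 1 := by
        have := w_le_one (b := b) (t := M+1) (show k ≠ 0 by omega)
        omega
      subst hj
      refine ⟨P b k m' + 1, ?_⟩
      rw [F_at_zero hk le_rfl (show 1 ≤ blockLen b k (m'+1) by omega)]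
      omega
  · -- r ≥ 1
    have hw := w_nondvd (k := k) hb m r hr0 hr
    rw [show b*m + r = M + 1 by omega] at hw
    have hrk : r = b - k := by
      by_contra hc
      rw [if_neg hc] at hw
      omega
    have hk1 : 1 ≤ k := by omega
    have hj : j = 1 := by rw [if_pos hrk] at hw; omega
    subst hj
    refine ⟨P b k m, ?_⟩
    rw [F_at_one hk m]
    have hP := P_rec hb hk m (r-1) (by omega)
    rw [if_neg (show ¬ b - k ≤ r - 1 by omega)] at hP
    rw [show M = b*m + (r-1) by omega] at *
    omega

theorem fixedpoint {b k : ℕ} (hb : 2 ≤ b) (hk : k < b) :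
    explicitSeq b k = explode (fseq b k) := by
  funext n
  obtain ⟨m, j, hj, rfl⟩ := decomp b k n
  rw [explode_eq (fseq b k)]
  rcases Nat.eq_zero_or_pos j with rfl | hj1
  · rw [e_one ⟨m, add_zero _⟩, if_neg]
    rintro ⟨t, ht⟩
    have ht' : P b k m + 0 + 1 = F b k (t+1) := ht
    obtain ⟨m', j', hj', rfl⟩ := decomp b k t
    rcases Nat.eq_zero_or_pos j' with rfl | hj'1
    · rw [show P b k m' + 0 + 1 = P b k m' + 1 by omega, F_at_one hk] at ht'
      obtain ⟨Mz, iz, hi1, hi2, heq⟩ := memZ_A hb hk m'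
      exact not_one_eq_zeroPos hi1 hi2 m (by omega)
    · rw [F_at_zero hk hj'1 hj'] at ht'
      obtain ⟨Mz, iz, hi1, hi2, heq⟩ := memZ_B hb hk m' j' hj'1 hj'
      exact not_one_eq_zeroPos hi1 hi2 m (by omega)
  · rw [e_zero, if_pos]
    · obtain ⟨t, ht⟩ := zero_is_F hb hk m j hj1 hj
      exact ⟨t, ht⟩
    · rintro ⟨m', hm'⟩
      exact not_one_eq_zeroPos hj1 hj m' hm'.symm

theorem S_lower (g : ℕ → ℕ) : ∀ t, 1 ≤ t → t + g 0 ≤ S g t := by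
  intro t
  induction t with
  | zero => omega
  | succ t ih =>
    intro _
    rcases Nat.eq_zero_or_pos t with rfl | ht
    · have h1 := S_succ g 0
      have h0 : S g 0 = 0 := rfl
      omega
    · have := S_succ g t
      have := ih ht
      omega

open Classical in
theorem explode_local {g g' : ℕ → ℕ} (h0 : 1 ≤ g 0) {n : ℕ} (hn : 1 ≤ n)
    (hag : ∀ i, i < n → g i = g' i) : explode g n = explode g' n := by
  have h0' : 1 ≤ g' 0 := by rw [← hag 0 hn]; exact h0
  have key : ∀ (u u' : ℕ → ℕ), 1 ≤ u 0 → (∀ i, i < n → u i = u' i) →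
      (∃ t, S u t ≤ n ∧ n < S u t + u t) → (∃ t, S u' t ≤ n ∧ n < S u' t + u' t) := by
    rintro u u' hu hagu ⟨t, h1, h2⟩
    rcases Nat.eq_zero_or_pos t with rfl | ht
    · refine ⟨0, by simp [S], ?_⟩
      have hS0 : S u 0 = 0 := rfl
      have hS0' : S u' 0 = 0 := rfl
      rw [hS0'] at *
      rw [hS0] at h2
      rw [← hagu 0 hn]
      omega
    · have hlow := S_lower u t ht
      have htn : t < n := by omega
      have hSeq : S u t = S u' t := by
        unfold S
        apply Finset.sum_congr rfl
        intro i hi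
        rw [Finset.mem_range] at hi
        rw [hagu i (by omega)]
      refine ⟨t, ?_, ?_⟩
      · omega
      · rw [← hSeq, ← hagu t htn]; omega
  have e1 : explode g n = if (∃ t, S g t ≤ n ∧ n < S g t + g t) then 1 else 0 := rfl
  have e2 : explode g' n = if (∃ t, S g' t ≤ n ∧ n < S g' t + g' t) then 1 else 0 := rfl
  rw [e1, e2]
  by_cases h : ∃ t, S g t ≤ n ∧ n < S g t + g t
  · rw [if_pos h, if_pos (key g g' h0 hag h)]
  · rw [if_neg h, if_neg (fun hc => h (key g' g h0' (fun i hi => (hag i hi).symm) hc))]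

theorem sol_unique {b k : ℕ} (hk : k < b) (e e' : ℕ → ℕ)
    (he0 : e 0 = 1) (he'0 : e' 0 = 1)
    (hfix : e = explode (fun n => k * shift e n + (b - k) * e n))
    (hfix' : e' = explode (fun n => k * shift e' n + (b - k) * e' n)) : e = e' := by
  funext n
  induction n using Nat.strong_induction_on with
  | _ n ih =>
    rcases Nat.eq_zero_or_pos n with rfl | hn
    · rw [he0, he'0]
    · have h0 : 1 ≤ k * shift e 0 + (b - k) * e 0 := by
        simp [shift, he0]
        omega
      have hag : ∀ i, i < n →
          k * shift e i + (b - k) * e i = k * shift e' i + (b - k) * e' i := by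
        intro i hi
        have he : e i = e' i := ih i hi
        have hs : shift e i = shift e' i := by
          cases i with
          | zero => rfl
          | succ i => exact ih i (by omega)
        rw [he, hs]
      calc e n = explode (fun n => k * shift e n + (b - k) * e n) n := by rw [← hfix]
        _ = explode (fun n => k * shift e' n + (b - k) * e' n) n :=
            explode_local h0 hn hag
        _ = e' n := by rw [← hfix']

end UBSaux

/-- For the `b`-ary tree with constant rotor `k < b`, the system
`e = explode (k·θe + (b-k)·e)` together with `e_1 = 1` has a unique binary solution,
namely `1 0^{z_1} 1 0^{z_2} ⋯` for `k = 0` and `1 0^{[ℓ_1=b-k]} 1 0^{[ℓ_2=b-k]} ⋯`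
for `0 < k < b`. -/
theorem unique_binary_solution_regular_tree (b k : ℕ) (hb : 2 ≤ b) (hk : k < b) :
    ((∀ n, explicitSeq b k n ≤ 1) ∧ explicitSeq b k 0 = 1 ∧
      explicitSeq b k =
        explode (fun n => k * shift (explicitSeq b k) n + (b - k) * explicitSeq b k n)) ∧
    ∀ e : ℕ → ℕ, (∀ n, e n ≤ 1) → e 0 = 1 →
      e = explode (fun n => k * shift e n + (b - k) * e n) → e = explicitSeq b k := by
  have hfix : explicitSeq b k =
      explode (fun n => k * shift (explicitSeq b k) n + (b - k) * explicitSeq b k n) :=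
    UBSaux.fixedpoint hb hk
  have h0 : explicitSeq b k 0 = 1 := UBSaux.e_one ⟨0, (UBSaux.P_zero b k).symm⟩
  refine ⟨⟨?_, h0, hfix⟩, ?_⟩
  · intro n
    rw [UBSaux.e_def]
    split <;> omega
  · intro e _ he0 hfixe
    exact UBSaux.sol_unique hk e (explicitSeq b k) he0 h0 hfixe hfix
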